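/- Let l₂ : ℝ × ℝ → ℝ be defined by l₂(x, y) = (1/π)·arctan(4y(x − 1/2)) + 1/2. Then for every real x with x < 1/4 and sin(πx) ≠ 0, and every real y > 0, one has 0 < l₂(x, 4y/sin²(πx)) < 1/y. -/

import Mathlib

/-- The function l₂(x, y) = (1/π)·arctan(4y(x − 1/2)) + 1/2. -/
noncomputable def l2 (x y : ℝ) : ℝ := (1 / Real.pi) * Real.arctan (4 * y * (x - 1 / 2)) + 1 / 2

/-!
Write `l₂(x, y) = (π/2 + arctan z) / π` with `z = 4y(x − 1/2)`. Positivity is `arctan z > −π/2`.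
For `z < 0` the reflection `arctan z⁻¹ = −π/2 − arctan z` gives `π/2 + arctan z = arctan (−z⁻¹) < −z⁻¹`,
so `l₂(x, y) < 1 / (4πy(1/2 − x))`. At the point `y' = 4y / sin²(πx) ≥ 4y` with `x < 1/4` the
denominator exceeds `4πy > y`.
-/

open Real

theorem Real.arctan_lt_self {x : ℝ} (hx : 0 < x) : arctan x < x :=
  calc arctan x < tan (arctan x) := lt_tan (arctan_pos.mpr hx) (arctan_lt_pi_div_two x)
    _ = x := tan_arctan x

theorem Real.pi_div_two_add_arctan_lt {x : ℝ} (hx : x < 0) : π / 2 + arctan x < -x⁻¹ :=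
  calc π / 2 + arctan x = arctan (-x⁻¹) := by rw [arctan_neg, arctan_inv_of_neg hx]; ring
    _ < -x⁻¹ := arctan_lt_self (neg_pos.mpr (inv_lt_zero.mpr hx))

theorem l2_eq (x y : ℝ) : l2 x y = (π / 2 + arctan (4 * y * (x - 1 / 2))) / π := by
  rw [l2]
  field_simp
  ring

theorem l2_pos (x y : ℝ) : 0 < l2 x y := by
  rw [l2_eq]
  exact div_pos (by linarith [neg_pi_div_two_lt_arctan (4 * y * (x - 1 / 2))]) pi_pos

theorem l2_lt {x y : ℝ} (hx : x < 1 / 2) (hy : 0 < y) :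
    l2 x y < 1 / (4 * π * y * (1 / 2 - x)) := by
  have hz : 4 * y * (x - 1 / 2) < 0 := mul_neg_of_pos_of_neg (by positivity) (by linarith)
  have hinv : -(4 * y * (x - 1 / 2))⁻¹ = 1 / (4 * y * (1 / 2 - x)) := by
    rw [← inv_neg, one_div]
    ring_nf
  rw [l2_eq, div_lt_iff₀ pi_pos]
  calc π / 2 + arctan (4 * y * (x - 1 / 2)) < -(4 * y * (x - 1 / 2))⁻¹ :=
        pi_div_two_add_arctan_lt hz
    _ = 1 / (4 * π * y * (1 / 2 - x)) * π := by
        rw [hinv]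
        field_simp

/-- The bound 0 < ξ₂(x, y) < 1/y for x < 1/4, where
ξ₂(x, y) = l₂(x, 4y/sin²(πx)). -/
theorem xi2_bound (x : ℝ) (hx : x < 1 / 4) (hsin : Real.sin (Real.pi * x) ≠ 0)
    (y : ℝ) (hy : 0 < y) :
    0 < l2 x (4 * y / (Real.sin (Real.pi * x)) ^ 2) ∧
      l2 x (4 * y / (Real.sin (Real.pi * x)) ^ 2) < 1 / y := by
  set t := 4 * y / sin (π * x) ^ 2
  have ht : 4 * y ≤ t :=
    le_div_self (by positivity) (by positivity) (sin_sq_le_one _)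
  refine ⟨l2_pos x t, (l2_lt (by linarith) (by linarith)).trans ?_⟩
  have hπt : 0 < π * t := by positivity
  apply one_div_lt_one_div_of_lt hy
  nlinarith [mul_pos hπt (by linarith : (0 : ℝ) < 1 - 4 * x), pi_gt_three]
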